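/- Let K be a local field of characteristic p with perfection K^perf, and let ψ be a Drinfeld A-module of good reduction over O_K with canonical series x satisfying ψ_a x = x φ̄_a and x ≡ 1 mod m_K, and χ the induced isomorphism on K^perf/O_{K^perf}. Then for any ξ ∈ K of normalized valuation -i ≤ 0, the element χ^{-1}([ξ]) - [ξ] lies in the submodule W_i(K^perf/O_{K^perf}). -/

import Mathlib

/-!
STATEMENT 13: Setting of the canonical quasi-isomorphism: `K = k((t)) = LaurentSeries k` a
local field of characteristic `p`, `Kperf = PerfectClosure K p` its perfection with valuation
ring `O_{Kperf}`, `ψ` a Drinfeld `A`-module of good reduction over `O_K` with reduction `φ̄`,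
`x` the canonical twisted series (`ψ_a x = x φ̄_a`, coefficients in `O_K`, `x ≡ 1 mod m_K`),
and `χ` the induced bijection of `Kperf/O_{Kperf}` (given by the partial-sum formula, well
defined and bijective mod `O`).  Then for any `ξ ∈ K` of normalized valuation `-i ≤ 0`
(`i : ℕ`), the element `χ⁻¹([ξ]) - [ξ]` lies in `W_i(Kperf/O_{Kperf})`, the left
`R° = k[τ^{±1}]`-submodule generated by the classes of elements of `K` of normalized
valuation `> -i`.  Concretely: if `χ η ≡ ξ mod O_{Kperf}` then `η - ξ` lies in the twisted
Laurent span of such classes.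
-/

noncomputable section

variable (p : ℕ) [Fact p.Prime] (k : Type) [Field k] [Fintype k] [CharP k p]

instance : CharP (LaurentSeries k) p :=
  charP_of_injective_ringHom (HahnSeries.C_injective (Γ := ℤ) (R := k)) p

abbrev Kperf := PerfectClosure (LaurentSeries k) p

abbrev ιK : LaurentSeries k →+* Kperf p k := PerfectClosure.of (LaurentSeries k) p

def Operf : Set (Kperf p k) :=
  {ξ | ∀ (m : ℕ) (z : LaurentSeries k), ξ ^ (p ^ m) = ιK p k z → 0 ≤ z.orderTop}

def frI (n : ℕ) (ξ : Kperf p k) : Kperf p k :=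
  (⇑(frobeniusEquiv (Kperf p k) p).symm)^[n] ξ

def conjEqCoeff (d : ℕ) (f : ℕ → LaurentSeries k) (x : ℕ → LaurentSeries k) (m : ℕ) :
    LaurentSeries k :=
  ∑ i ∈ (Finset.range (d + 1)).filter (fun i => d ≤ m + i),
    (f i * (x (m + i - d)) ^ (p ^ i) -
      x (m + i - d) * HahnSeries.C ((⇑(frobeniusEquiv k p).symm)^[m + i - d] ((f i).coeff 0)))

def evPsi (c : ℕ → LaurentSeries k) (D : ℕ) (ξ : Kperf p k) : Kperf p k :=
  ∑ i ∈ Finset.range (D + 1), ιK p k (c i) * ξ ^ (p ^ i)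

/-- Action of a twisted Laurent polynomial on the perfection. -/
def twistedLaurentAct (q : LaurentPolynomial k) (ξ : Kperf p k) : Kperf p k :=
  Finsupp.sum q.coeff fun i a => ιK p k (HahnSeries.C a) * ((frobeniusEquiv (Kperf p k) p ^ i) ξ)

/-- Membership in the left `R°`-submodule of `Kperf/O_{Kperf}` generated by classes of `S`. -/
def InTwistedSpan (S : Set (Kperf p k)) (m : Kperf p k) : Prop :=
  ∃ (t : Finset (Kperf p k)) (c : Kperf p k → LaurentPolynomial k),
    ↑t ⊆ S ∧ (m - ∑ ξ ∈ t, twistedLaurentAct p k (c ξ) ξ) ∈ Operf p k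

/-!
Write `χ = ∑ xₙ τ⁻ⁿ` with `τ` the Frobenius. As `x₀ ≡ 1` and `xₙ ∈ m_K` for `n ≥ 1`, this twisted
series has an inverse `∑ τ⁻ⁿ ∘ wₙ` whose coefficients satisfy `w₀ ≡ 1` and `wₙ ∈ m_K` for `n ≥ 1`.
For `ξ` of valuation `-i` put `η' = ∑_{n ≤ i} τ⁻ⁿ (wₙ ξ)`. Expanding `χ η'` as a double sum, the
terms of total degree `≤ i` add up to `ξ`, while a term of degree `m + n > i` contains
`xₘ^(p^(m+n))` with `m ≥ 1`, of valuation `> i`, so it is integral. Hence `χ η' ≡ ξ`, so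
`χ⁻¹[ξ] = [η']` by injectivity of `χ`, and `η' - ξ = ∑_{n ≤ i} τ⁻ⁿ ((wₙ - δₙ₀) ξ)` is a twisted
combination of elements of valuation `> -i`.
-/

open Finset

namespace LaurentSeries

variable {F : Type*} [Field F]

theorem orderTop_pow (u : LaurentSeries F) (n : ℕ) : (u ^ n).orderTop = n • u.orderTop := by
  simpa only [HahnSeries.addVal_apply] using (HahnSeries.addVal ℤ F).map_pow u n

theorem orderTop_inv (u : LaurentSeries F) : u⁻¹.orderTop = -u.orderTop := by
  simpa only [HahnSeries.addVal_apply] using (HahnSeries.addVal ℤ F).map_inv (x := u)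

theorem lt_orderTop_sum {ι : Type*} {s : Finset ι} {f : ι → LaurentSeries F} {c : WithTop ℤ}
    (hc : c ≠ ⊤) (h : ∀ a ∈ s, c < (f a).orderTop) : c < (∑ a ∈ s, f a).orderTop := by
  simpa only [HahnSeries.addVal_apply] using (HahnSeries.addVal ℤ F).map_lt_sum hc h

theorem orderTop_lt_orderTop_mul {u v : LaurentSeries F} (hu : 0 < u.orderTop) (hv : v ≠ 0) :
    v.orderTop < (u * v).orderTop := by
  rcases eq_or_ne u 0 with rfl | hu0
  · simpa [HahnSeries.orderTop_ne_top] using hv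
  rw [HahnSeries.orderTop_mul, ← HahnSeries.order_eq_orderTop_of_ne_zero hu0,
    ← HahnSeries.order_eq_orderTop_of_ne_zero hv] at *
  exact_mod_cast (by simpa using hu : v.order < u.order + v.order)

theorem orderTop_pow_mul_nonneg {u v : LaurentSeries F} {i N : ℕ} (hu : 0 < u.orderTop)
    (hv : ((-i : ℤ) : WithTop ℤ) ≤ v.orderTop) (hN : i < N) : 0 ≤ (u ^ N * v).orderTop := by
  rcases eq_or_ne v 0 with rfl | hv0
  · simp
  rcases eq_or_ne u 0 with rfl | hu0
  · simp [zero_pow (Nat.ne_zero_of_lt hN)]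
  rw [HahnSeries.orderTop_mul, orderTop_pow, ← HahnSeries.order_eq_orderTop_of_ne_zero hu0,
    ← HahnSeries.order_eq_orderTop_of_ne_zero hv0] at *
  have ha : 0 < u.order := by exact_mod_cast hu
  have hb : -(i : ℤ) ≤ v.order := by exact_mod_cast hv
  rw [← WithTop.coe_nsmul, ← WithTop.coe_add, nsmul_eq_mul]
  exact_mod_cast (by nlinarith : (0 : ℤ) ≤ N * u.order + v.order)

end LaurentSeries

section TwistedInverse

variable {R : Type*} [Field R] (q : ℕ)

/- With `τ` the `q`-power Frobenius, `∑ τ⁻ⁿ ∘ twistedInv q x n` is the inverse of `∑ xₙ τ⁻ⁿ`: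
writing their composite as `∑ τ⁻ˢ ∘ cₛ`, one has `cₛ = ∑_{a+b=s} x_a^(q^s) w_b`, and the
recursion makes this `δ_{s,0}`. -/
def twistedInv (x : ℕ → R) : ℕ → R
  | 0 => (x 0)⁻¹
  | s + 1 => -((x 0) ^ q ^ (s + 1))⁻¹ *
      ∑ a ∈ range (s + 1), x (a + 1) ^ q ^ (s + 1) * twistedInv x (s - a)

theorem twistedInv_zero (x : ℕ → R) : twistedInv q x 0 = (x 0)⁻¹ := by
  rw [twistedInv]

theorem sum_antidiagonal_pow_mul_twistedInv {x : ℕ → R} (hx0 : x 0 ≠ 0) (s : ℕ) :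
    ∑ ab ∈ antidiagonal s, x ab.1 ^ q ^ s * twistedInv q x ab.2 = if s = 0 then 1 else 0 := by
  rw [Nat.sum_antidiagonal_eq_sum_range_succ fun a b => x a ^ q ^ s * twistedInv q x b]
  cases s with
  | zero => simp [twistedInv_zero, hx0]
  | succ s =>
    rw [sum_range_succ', if_neg s.succ_ne_zero, Nat.sub_zero, twistedInv, neg_mul,
      mul_neg, ← mul_assoc, mul_inv_cancel₀ (pow_ne_zero _ hx0), one_mul]
    simp only [Nat.add_sub_add_right, add_neg_cancel]

end TwistedInverse

section TwistedInverseIntegral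

open LaurentSeries

variable {F : Type*} [Field F] {q : ℕ} {x : ℕ → LaurentSeries F}

theorem orderTop_twistedInv_succ_pos (hq : q ≠ 0) (hx0 : (x 0).orderTop = 0)
    (hx : ∀ n, 0 < n → 0 < (x n).orderTop) {s : ℕ}
    (hw : ∀ a ≤ s, 0 ≤ (twistedInv q x a).orderTop) :
    0 < (twistedInv q x (s + 1)).orderTop := by
  rw [twistedInv, HahnSeries.orderTop_mul, HahnSeries.orderTop_neg, orderTop_inv, orderTop_pow,
    hx0, smul_zero, neg_zero, zero_add]
  refine lt_orderTop_sum WithTop.zero_ne_top fun a _ => ?_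
  rw [HahnSeries.orderTop_mul, orderTop_pow]
  exact add_pos_of_pos_of_nonneg (nsmul_pos (hx _ a.succ_pos) (pow_ne_zero _ hq))
    (hw _ (Nat.sub_le s a))

theorem orderTop_twistedInv_nonneg (hq : q ≠ 0) (hx0 : (x 0).orderTop = 0)
    (hx : ∀ n, 0 < n → 0 < (x n).orderTop) (s : ℕ) : 0 ≤ (twistedInv q x s).orderTop := by
  induction s using Nat.strong_induction_on with
  | _ s ih =>
    cases s with
    | zero => rw [twistedInv_zero, orderTop_inv, hx0, neg_zero]
    | succ s => exact (orderTop_twistedInv_succ_pos hq hx0 hx fun a ha => ih a (by omega)).le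

theorem orderTop_twistedInv_sub_pos (hq : q ≠ 0) (hx0 : 0 < (x 0 - 1).orderTop)
    (hx : ∀ n, 0 < n → 0 < (x n).orderTop) (s : ℕ) :
    0 < (twistedInv q x s - if s = 0 then 1 else 0).orderTop := by
  have hx0' : (x 0).orderTop = 0 := ((HahnSeries.orderTop_self_sub_one_pos_iff _).mp hx0).1
  cases s with
  | zero =>
    have hx0ne : x 0 ≠ 0 := HahnSeries.orderTop_ne_top.mp (by simp [hx0'])
    have h : (x 0)⁻¹ - 1 = -((x 0)⁻¹ * (x 0 - 1)) := by
      field_simp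
      ring
    rwa [if_pos rfl, twistedInv_zero, h, HahnSeries.orderTop_neg, HahnSeries.orderTop_mul,
      orderTop_inv, hx0', neg_zero, zero_add]
  | succ s =>
    rw [if_neg s.succ_ne_zero, sub_zero]
    exact orderTop_twistedInv_succ_pos hq hx0' hx fun a _ =>
      orderTop_twistedInv_nonneg hq hx0' hx a

end TwistedInverseIntegral

theorem Finset.sum_product_range_filter_add_lt {β : Type*} [AddCommMonoid β] {M N : ℕ}
    (h : N ≤ M) (f : ℕ × ℕ → β) :
    ∑ q ∈ range M ×ˢ range N with q.1 + q.2 < N, f q =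
      ∑ s ∈ range N, ∑ q ∈ antidiagonal s, f q := by
  rw [← sum_biUnion]
  · congr 1
    ext q
    simp only [mem_filter, mem_product, mem_range, mem_biUnion, HasAntidiagonal.mem_antidiagonal]
    constructor
    · rintro ⟨-, hq⟩
      exact ⟨_, hq, rfl⟩
    · rintro ⟨s, hs, rfl⟩
      omega
  · intro a _ b _ hab
    exact disjoint_left.mpr fun q ha hb => hab <|
      (HasAntidiagonal.mem_antidiagonal.mp ha).symm.trans (HasAntidiagonal.mem_antidiagonal.mp hb)

section Perfection

variable {p k}

theorem mem_Operf_of_pow_eq {ξ : Kperf p k} {m : ℕ} {z : LaurentSeries k}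
    (h : ξ ^ p ^ m = ιK p k z) (hz : 0 ≤ z.orderTop) : ξ ∈ Operf p k := by
  intro m' z' h'
  have hp := (Fact.out : p.Prime).ne_zero
  rcases le_total m m' with hm | hm
  · obtain ⟨d, rfl⟩ := Nat.exists_eq_add_of_le hm
    have : z' = z ^ p ^ d := (ιK p k).injective <| by
      rw [← h', map_pow, ← h, ← pow_mul, ← pow_add]
    rw [this, LaurentSeries.orderTop_pow]
    exact nsmul_nonneg hz _
  · obtain ⟨d, rfl⟩ := Nat.exists_eq_add_of_le hm
    have : z = z' ^ p ^ d := (ιK p k).injective <| by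
      rw [← h, map_pow, ← h', ← pow_mul, ← pow_add]
    rw [this, LaurentSeries.orderTop_pow] at hz
    exact (nsmul_nonneg_iff (pow_ne_zero _ hp)).mp hz

theorem exists_pow_eq_ιK_of_mem_Operf {ξ : Kperf p k} (hξ : ξ ∈ Operf p k) :
    ∃ (m : ℕ) (z : LaurentSeries k), ξ ^ p ^ m = ιK p k z ∧ 0 ≤ z.orderTop :=
  let ⟨m, z, h⟩ := IsPRadical.pow_mem (ιK p k) p ξ
  ⟨m, z, h.symm, hξ m z h.symm⟩

variable (p k) in
def operfAddSubgroup : AddSubgroup (Kperf p k) where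
  carrier := Operf p k
  zero_mem' := mem_Operf_of_pow_eq (m := 0) (z := 0) (by simp) (by simp)
  add_mem' {ξ η} hξ hη := by
    obtain ⟨m, u, hu, hu0⟩ := exists_pow_eq_ιK_of_mem_Operf hξ
    obtain ⟨n, v, hv, hv0⟩ := exists_pow_eq_ιK_of_mem_Operf hη
    refine mem_Operf_of_pow_eq (m := m + n) (z := u ^ p ^ n + v ^ p ^ m) ?_ ?_
    · rw [add_pow_char_pow, map_add, map_pow, map_pow, ← hu, ← hv, ← pow_mul, ← pow_mul,
        ← pow_add, ← pow_add, add_comm n]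
    · refine le_trans (le_min ?_ ?_) HahnSeries.min_orderTop_le_orderTop_add
      · rw [LaurentSeries.orderTop_pow]
        exact nsmul_nonneg hu0 _
      · rw [LaurentSeries.orderTop_pow]
        exact nsmul_nonneg hv0 _
  neg_mem' {ξ} hξ := by
    obtain ⟨m, u, hu, hu0⟩ := exists_pow_eq_ιK_of_mem_Operf hξ
    refine mem_Operf_of_pow_eq (m := m) (z := -u) ?_ (by rwa [HahnSeries.orderTop_neg])
    rw [← zero_sub, sub_pow_char_pow, hu, map_neg,
      zero_pow (pow_ne_zero _ (Fact.out : p.Prime).ne_zero), zero_sub]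

@[simp]
theorem mem_operfAddSubgroup {ξ : Kperf p k} : ξ ∈ operfAddSubgroup p k ↔ ξ ∈ Operf p k :=
  Iff.rfl

end Perfection

section Frobenius

variable {p k}

theorem frI_eq (n : ℕ) : frI p k n = (iterateFrobeniusEquiv (Kperf p k) p n).symm := by
  rw [iterateFrobeniusEquiv_symm, RingAut.coe_pow]
  rfl

theorem frI_add_apply (m n : ℕ) (ξ : Kperf p k) : frI p k (m + n) ξ = frI p k m (frI p k n ξ) :=
  Function.iterate_add_apply _ m n ξ

theorem frI_pow (n : ℕ) (ξ : Kperf p k) : frI p k n ξ ^ p ^ n = ξ :=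
  iterate_frobeniusEquiv_symm_pow_p_pow _ p ξ n

theorem frI_sum {ι : Type*} (n : ℕ) (s : Finset ι) (f : ι → Kperf p k) :
    frI p k n (∑ a ∈ s, f a) = ∑ a ∈ s, frI p k n (f a) := by
  rw [frI_eq, map_sum]

theorem ιK_mul_frI (n : ℕ) (a b : LaurentSeries k) :
    ιK p k a * frI p k n (ιK p k b) = frI p k n (ιK p k (a ^ p ^ n * b)) := by
  rw [frI_eq, map_mul, map_mul, map_pow, ← iterateFrobeniusEquiv_def, RingEquiv.symm_apply_apply]

theorem frI_ιK_mem_Operf (n : ℕ) {z : LaurentSeries k} (hz : 0 ≤ z.orderTop) :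
    frI p k n (ιK p k z) ∈ Operf p k :=
  mem_Operf_of_pow_eq (frI_pow n _) hz

theorem twistedLaurentAct_sum {ι : Type*} (s : Finset ι) (f : ι → LaurentPolynomial k)
    (ξ : Kperf p k) :
    twistedLaurentAct p k (∑ a ∈ s, f a) ξ = ∑ a ∈ s, twistedLaurentAct p k (f a) ξ := by
  unfold twistedLaurentAct
  rw [AddMonoidAlgebra.coeff_sum, Finsupp.sum_finsetSum_index] <;> intros <;>
    simp only [map_zero, map_add, zero_mul, add_mul]

theorem twistedLaurentAct_T_neg (n : ℕ) (ξ : Kperf p k) :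
    twistedLaurentAct p k (LaurentPolynomial.T (-n)) ξ = frI p k n ξ := by
  unfold twistedLaurentAct LaurentPolynomial.T
  rw [AddMonoidAlgebra.coeff_single, Finsupp.sum_single_index (by simp), map_one, map_one,
    one_mul, zpow_neg, zpow_natCast, ← iterateFrobeniusEquiv_eq_pow, RingAut.inv_apply,
    frI_eq]

end Frobenius

section Span

variable {p k}

theorem inTwistedSpan_of_sub_sum_mem {S : Set (Kperf p k)} {m : Kperf p k} {ι : Type*}
    (s : Finset ι) (f : ι → Kperf p k) (g : ι → LaurentPolynomial k) (hf : ∀ n ∈ s, f n ∈ S)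
    (h : m - ∑ n ∈ s, twistedLaurentAct p k (g n) (f n) ∈ Operf p k) :
    InTwistedSpan p k S m := by
  classical
  refine ⟨s.image f, fun y => ∑ n ∈ s with f n = y, g n, by simpa [Set.subset_def] using hf, ?_⟩
  convert h using 2
  simp_rw [twistedLaurentAct_sum]
  rw [← sum_fiberwise_of_maps_to (fun n hn => mem_image_of_mem f hn)]
  refine sum_congr rfl fun y _ => sum_congr rfl fun n hn => ?_
  rw [(mem_filter.mp hn).2]

end Span

section Truncation

variable {k}

def twistedInvTrunc (x : ℕ → LaurentSeries k) (M : ℕ) (ξ : LaurentSeries k) : Kperf p k :=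
  ∑ n ∈ range M, frI p k n (ιK p k (twistedInv p x n * ξ))

variable {p}

theorem twistedInvTrunc_sub_ιK (x : ℕ → LaurentSeries k) {M : ℕ} (hM : 0 < M)
    (ξ : LaurentSeries k) :
    twistedInvTrunc p x M ξ - ιK p k ξ =
      ∑ n ∈ range M, frI p k n (ιK p k ((twistedInv p x n - if n = 0 then 1 else 0) * ξ)) := by
  have hterm (n : ℕ) : frI p k n (ιK p k ((twistedInv p x n - if n = 0 then 1 else 0) * ξ)) =
      frI p k n (ιK p k (twistedInv p x n * ξ)) - if n = 0 then ιK p k ξ else 0 := by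
    split_ifs with hn
    · subst hn
      simp [frI, sub_mul]
    · simp
  simp only [hterm, sum_sub_distrib, sum_ite_eq', mem_range, if_pos hM, twistedInvTrunc]

theorem sum_mul_frI_twistedInvTrunc_sub_ιK_mem {x : ℕ → LaurentSeries k}
    (hx0 : 0 < (x 0 - 1).orderTop) (hx : ∀ n, 0 < n → 0 < (x n).orderTop) {i M : ℕ}
    (hM : i + 1 ≤ M) {ξ : LaurentSeries k} (hξ : ((-i : ℤ) : WithTop ℤ) ≤ ξ.orderTop) :
    (∑ m ∈ range M, ιK p k (x m) * frI p k m (twistedInvTrunc p x (i + 1) ξ)) - ιK p k ξ ∈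
      Operf p k := by
  have hp := (Fact.out : p.Prime)
  have hx0' : (x 0).orderTop = 0 := ((HahnSeries.orderTop_self_sub_one_pos_iff _).mp hx0).1
  have hx0ne : x 0 ≠ 0 := HahnSeries.orderTop_ne_top.mp (by simp [hx0'])
  let T : ℕ × ℕ → Kperf p k := fun ab =>
    frI p k (ab.1 + ab.2) (ιK p k (x ab.1 ^ p ^ (ab.1 + ab.2) * (twistedInv p x ab.2 * ξ)))
  have hexpand : ∑ m ∈ range M, ιK p k (x m) * frI p k m (twistedInvTrunc p x (i + 1) ξ) =
      ∑ ab ∈ range M ×ˢ range (i + 1), T ab := by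
    rw [sum_product]
    refine sum_congr rfl fun m _ => ?_
    rw [twistedInvTrunc, frI_sum, mul_sum]
    refine sum_congr rfl fun n _ => ?_
    rw [← frI_add_apply, ιK_mul_frI]
  have hdiag (s : ℕ) : ∑ ab ∈ antidiagonal s, T ab =
      frI p k s (ιK p k ((if s = 0 then 1 else 0) * ξ)) := by
    rw [← sum_antidiagonal_pow_mul_twistedInv p hx0ne s, sum_mul, map_sum, frI_sum]
    refine sum_congr rfl fun ab hab => ?_
    simp only [T, HasAntidiagonal.mem_antidiagonal.mp hab, mul_assoc]
  have htriangle : ∑ ab ∈ range M ×ˢ range (i + 1) with ab.1 + ab.2 < i + 1, T ab = ιK p k ξ := by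
    rw [sum_product_range_filter_add_lt hM, sum_eq_single 0, hdiag, if_pos rfl, one_mul]
    · rfl
    · intro s _ hs
      rw [hdiag, if_neg hs, zero_mul, map_zero, frI_eq, map_zero]
    · simp
  have hrest : ∑ ab ∈ range M ×ˢ range (i + 1) with ¬ ab.1 + ab.2 < i + 1, T ab ∈ Operf p k := by
    refine (operfAddSubgroup p k).sum_mem fun ab hab => frI_ιK_mem_Operf _ ?_
    simp only [mem_filter, mem_product, mem_range] at hab
    refine LaurentSeries.orderTop_pow_mul_nonneg (i := i) (hx _ (by omega)) ?_ ?_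
    · rw [HahnSeries.orderTop_mul]
      exact hξ.trans (le_add_of_nonneg_left (orderTop_twistedInv_nonneg hp.ne_zero hx0' hx _))
    · exact (Nat.lt_pow_self hp.one_lt).trans_le (Nat.pow_le_pow_right hp.pos (by omega))
  rw [hexpand, ← sum_filter_add_sum_filter_not _ (fun ab => ab.1 + ab.2 < i + 1), htriangle,
    add_sub_cancel_left]
  exact hrest

end Truncation

theorem chiInv_sub_self_mem_wFiltration
    (x : ℕ → LaurentSeries k)
    (hx0 : 0 < (x 0 - 1).orderTop) (hxpos : ∀ n, 0 < n → 0 < (x n).orderTop)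
    (χ : Kperf p k → Kperf p k)
    (hχformula : ∀ ξ : Kperf p k, ∃ N : ℕ, ∀ M, N ≤ M →
      (χ ξ - ∑ n ∈ Finset.range M, ιK p k (x n) * frI p k n ξ) ∈ Operf p k)
    (hχbij : ∀ ξ η : Kperf p k, (ξ - η ∈ Operf p k ↔ χ ξ - χ η ∈ Operf p k))
    (i : ℕ) (ξ : LaurentSeries k) (hξ : ξ.orderTop = ((-(i : ℤ) : ℤ) : WithTop ℤ)) :
    ∀ η : Kperf p k, χ η - ιK p k ξ ∈ Operf p k →
      InTwistedSpan p k
        {y | ∃ z : LaurentSeries k,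
          ((-(i : ℤ) : ℤ) : WithTop ℤ) < z.orderTop ∧ y = ιK p k z}
        (η - ιK p k ξ) := by
  intro η hη
  set η' := twistedInvTrunc p x (i + 1) ξ
  obtain ⟨N, hN⟩ := hχformula η'
  have hχη' : χ η' - ιK p k ξ ∈ Operf p k := by
    have := (operfAddSubgroup p k).add_mem (hN _ (le_max_left N (i + 1)))
      (sum_mul_frI_twistedInvTrunc_sub_ιK_mem hx0 hxpos (le_max_right N (i + 1)) hξ.ge)
    rwa [sub_add_sub_cancel] at this
  have hηη' : η - η' ∈ Operf p k := by
    refine (hχbij η η').mpr ?_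
    simpa only [sub_sub_sub_cancel_right, mem_operfAddSubgroup] using
      (operfAddSubgroup p k).sub_mem hη hχη'
  refine inTwistedSpan_of_sub_sum_mem (range (i + 1))
    (fun n => ιK p k ((twistedInv p x n - if n = 0 then 1 else 0) * ξ))
    (fun n => LaurentPolynomial.T (-n)) (fun n _ => ⟨_, ?_, rfl⟩) ?_
  · rw [← hξ]
    exact LaurentSeries.orderTop_lt_orderTop_mul
      (orderTop_twistedInv_sub_pos (Fact.out : p.Prime).ne_zero hx0 hxpos n)
      (HahnSeries.orderTop_ne_top.mp (by simp [hξ]))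
  · simp only [twistedLaurentAct_T_neg]
    rwa [← twistedInvTrunc_sub_ιK x i.succ_pos, sub_sub_sub_cancel_right]

end
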